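/- (Yao's box bound, derived form.) Suppose a game in the P-bit-fixing random oracle model for a random function G : [N] → {0,1} has winning probability at most P/N against all adversaries making Q classical queries, and the sampler makes 0 queries and the verifier makes 1 query. Then by the presampling theorem with P = √(Z(Q+1)N), any unbounded-time algorithm with Z bits of classical advice about G and Q classical queries to G (never querying the challenge point x) computes G(x) correctly on a uniformly random x ∈ [N] with probability at most 1/2 + 2√(Z(Q+1)/N). -/

import Mathlib

/-! The bound `1/2 + P/N + Z(Q+1)/P` holds for every `P > 0`; the choice `P = √(Z(Q+1)N)`,
which balances the two error terms, makes their sum `2√(Z(Q+1)/N)`. -/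

open Real

theorem le_two_sqrt_mul_of_forall_le_mul_add_div {a b x : ℝ} (ha : 0 < a) (hb : 0 ≤ b)
    (h : ∀ P : ℝ, 0 < P → x ≤ a * P + b / P) : x ≤ 2 * √(a * b) := by
  rcases hb.eq_or_lt with rfl | hb
  · rw [mul_zero, sqrt_zero, mul_zero]
    refine le_of_forall_pos_le_add fun ε hε => ?_
    simpa [mul_div_cancel₀ _ ha.ne'] using h (ε / a) (by positivity)
  · have hsa : 0 < √a := sqrt_pos.mpr ha
    have hsb : 0 < √b := sqrt_pos.mpr hb
    have hbalance : a * (√b / √a) + b / (√b / √a) = 2 * (√a * √b) := by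
      field_simp
      rw [sq_sqrt ha.le, sq_sqrt hb.le]
      ring
    rw [sqrt_mul ha.le, ← hbalance]
    exact h _ (div_pos hsb hsa)

theorem stmt_5 (N Z Q : ℕ) (hN : 0 < N) (δ : ℝ) (ν : ℝ → ℝ)
    (hbf : ∀ P : ℝ, 0 < P → ν P ≤ P / N)
    (hpresamp : ∀ P : ℝ, 0 < P →
      δ ≤ 1 / 2 + ν P + (Z : ℝ) * ((Q : ℝ) + 1) / P) :
    δ ≤ 1 / 2 + 2 * Real.sqrt ((Z : ℝ) * ((Q : ℝ) + 1) / N) := by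
  have hbound : ∀ P : ℝ, 0 < P →
      δ - 1 / 2 ≤ 1 / (N : ℝ) * P + (Z : ℝ) * ((Q : ℝ) + 1) / P := fun P hP => by
    have := hbf P hP
    have := hpresamp P hP
    rw [one_div_mul_eq_div]
    linarith
  have h := le_two_sqrt_mul_of_forall_le_mul_add_div (by positivity) (by positivity) hbound
  rw [one_div_mul_eq_div] at h
  linarith
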